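/- For OneMinMax* with reference point r = (−n, 2n) and n ≥ 2, for any two solutions x, y ∈ {0,1}^n \ {0ⁿ}: the Euclidean distance of f(x) to r is strictly smaller than that of f(y) to r if and only if |x|₁ > |y|₁. In particular, a solution closer to the reference point in objective space has strictly larger Hamming distance to 0ⁿ. -/
import Mathlib

def ones {n : ℕ} (x : Fin n → Bool) : ℕ := (Finset.univ.filter fun i => x i = true).card

/-- OneMinMax* objective vector. -/
def ommStarF (n : ℕ) (x : Fin n → Bool) : ℤ × ℤ :=
  if x = (fun _ => false) then (-(n : ℤ), 2 * n) else ((n : ℤ) - ones x, (ones x : ℤ))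

def dominates {n : ℕ} (f : (Fin n → Bool) → ℤ × ℤ) (y x : Fin n → Bool) : Prop :=
  (f x).1 ≤ (f y).1 ∧ (f x).2 ≤ (f y).2 ∧ ((f x).1 < (f y).1 ∨ (f x).2 < (f y).2)

def paretoOptimal {n : ℕ} (f : (Fin n → Bool) → ℤ × ℤ) (x : Fin n → Bool) : Prop :=
  ¬ ∃ y : Fin n → Bool, dominates f y x

/-- Euclidean distance of the OneMinMax* objective vector of `x` to the
reference point `(−n, 2n)`. -/
noncomputable def dStar (n : ℕ) (x : Fin n → Bool) : ℝ :=
  Real.sqrt ((((ommStarF n x).1 : ℝ) + n) ^ 2 + (((ommStarF n x).2 : ℝ) - 2 * n) ^ 2)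

lemma ones_le {n : ℕ} (x : Fin n → Bool) : ones x ≤ n := by
  have := Finset.card_filter_le (Finset.univ : Finset (Fin n)) (fun i => x i = true)
  simpa [ones] using this

lemma dStar_eq {n : ℕ} (x : Fin n → Bool) (hx : x ≠ (fun _ => false)) :
    dStar n x = Real.sqrt 2 * (2 * n - ones x) := by
  have h1 : (ones x : ℝ) ≤ n := by exact_mod_cast ones_le x
  have h2 : (0:ℝ) ≤ 2 * n - ones x := by linarith [h1, Nat.cast_nonneg (α := ℝ) n]
  rw [dStar, ommStarF, if_neg hx]
  push_cast
  have : ((n:ℝ) - ones x + n) ^ 2 + ((ones x : ℝ) - 2 * n) ^ 2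
      = 2 * (2 * n - ones x) ^ 2 := by ring
  rw [this, Real.sqrt_mul (by norm_num), Real.sqrt_sq h2]

lemma hamming_eq_ones {n : ℕ} (x : Fin n → Bool) :
    hammingDist x (fun _ => false) = ones x := by
  simp [hammingDist, ones]

theorem oneMinMaxStar_distance_anticorrelated (n : ℕ) (hn : 2 ≤ n)
    (x y : Fin n → Bool) (hx : x ≠ (fun _ => false)) (hy : y ≠ (fun _ => false)) :
    (dStar n x < dStar n y ↔ ones y < ones x) ∧
    (dStar n x < dStar n y →
      hammingDist y (fun _ => false) < hammingDist x (fun _ => false)) := by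
  have key : dStar n x < dStar n y ↔ ones y < ones x := by
    rw [dStar_eq x hx, dStar_eq y hy]
    have hs : (0:ℝ) < Real.sqrt 2 := Real.sqrt_pos.mpr (by norm_num)
    rw [mul_lt_mul_iff_right₀ hs]
    constructor
    · intro h
      have : (ones y : ℝ) < ones x := by linarith
      exact_mod_cast this
    · intro h
      have : (ones y : ℝ) < ones x := by exact_mod_cast h
      linarith
  exact ⟨key, fun h => by
    rw [hamming_eq_ones, hamming_eq_ones]; exact key.mp h⟩
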